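/- If f, g ∈ ℝ[z₁,…,zₙ] are non-zero real stable polynomials such that both f ≪ g and g ≪ f, then f = α·g for some real constant α. -/

import Mathlib

/-!
Restrict to a line `t ↦ a + t b` with all `b i > 0`. Then `g + i f` and `f + i g` become
univariate polynomials without zeros in the upper half-plane; conjugating, the first has no zeros
in the lower half-plane either, so it is a complex multiple of a real polynomial, and `f`, `g`
are proportional on the line. Two arbitrary points are compared through a point above both at
which `g` does not vanish, which gives `f(x) g(y) = f(y) g(x)` everywhere.
-/

open MvPolynomial

/-- A complex polynomial is *stable* if it is non-vanishing whenever all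
variables lie in the open upper half-plane. -/
def IsStable {σ : Type*} (f : MvPolynomial σ ℂ) : Prop :=
  ∀ z : σ → ℂ, (∀ i, 0 < (z i).im) → MvPolynomial.eval z f ≠ 0

/-- A real polynomial is *real stable* if it is non-vanishing whenever all
variables lie in the open upper half-plane. -/
def IsRealStable {σ : Type*} (f : MvPolynomial σ ℝ) : Prop :=
  ∀ z : σ → ℂ, (∀ i, 0 < (z i).im) → MvPolynomial.aeval z f ≠ 0

/-- `ProperPosition f g` means `f ≪ g`, i.e. `g + i·f` is stable. -/
def ProperPosition {σ : Type*} (f g : MvPolynomial σ ℝ) : Prop :=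
  IsStable (MvPolynomial.map (algebraMap ℝ ℂ) g +
    Complex.I • MvPolynomial.map (algebraMap ℝ ℂ) f)

namespace Polynomial

open Complex ComplexConjugate

theorem exists_eq_C_mul_map_ofReal_of_roots_im_eq_zero (F : ℂ[X])
    (hF : ∀ r ∈ F.roots, r.im = 0) :
    ∃ (c : ℂ) (R : ℝ[X]), F = C c * R.map (algebraMap ℝ ℂ) := by
  refine ⟨F.leadingCoeff, (F.roots.map fun r => X - C r.re).prod, ?_⟩
  conv_lhs => rw [(IsAlgClosed.splits F).eq_prod_roots]
  rw [Polynomial.map_multiset_prod, Multiset.map_map]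
  congr 2
  refine Multiset.map_congr rfl fun r hr => ?_
  simp [Complex.ext_iff, hF r hr]

theorem exists_eq_smul_of_map_add_I_mul_eq {p q R : ℝ[X]} {c : ℂ} (hq : q ≠ 0)
    (h : q.map (algebraMap ℝ ℂ) + C I * p.map (algebraMap ℝ ℂ) = C c * R.map (algebraMap ℝ ℂ)) :
    ∃ α : ℝ, p = α • q := by
  have hcoeff k : (q.coeff k : ℂ) + I * p.coeff k = c * R.coeff k := by
    simpa using congrArg (coeff · k) h
  have hqk k : q.coeff k = c.re * R.coeff k := by simpa using congrArg re (hcoeff k)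
  have hpk k : p.coeff k = c.im * R.coeff k := by simpa using congrArg im (hcoeff k)
  have hc : c.re ≠ 0 := fun h0 => hq (by ext k; simp [hqk k, h0])
  refine ⟨c.im / c.re, ?_⟩
  ext k
  rw [coeff_smul, smul_eq_mul, hqk k, hpk k]
  field_simp

/-- All roots of `q + i p` are real: a root `r` in the lower half-plane would make `conj r` a root
of `p + i q`, since `(p + i q)(conj r) = conj (-i (q + i p)(r))`. -/
theorem exists_eq_smul_of_add_I_mul_ne_zero {p q : ℝ[X]} (hq : q ≠ 0)
    (hqp : ∀ t : ℂ, 0 < t.im → aeval t q + I * aeval t p ≠ 0)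
    (hpq : ∀ t : ℂ, 0 < t.im → aeval t p + I * aeval t q ≠ 0) :
    ∃ α : ℝ, p = α • q := by
  set F : ℂ[X] := q.map (algebraMap ℝ ℂ) + C I * p.map (algebraMap ℝ ℂ)
  have hroots : ∀ r ∈ F.roots, r.im = 0 := by
    intro r hr
    have hr0 : aeval r q + I * aeval r p = 0 := by
      simpa [F, aeval_def, eval_map] using (mem_roots'.mp hr).2
    rcases lt_trichotomy r.im 0 with h | h | h
    · refine absurd ?_ (hpq (conj r) (by simpa using h))
      have hconj := congrArg conj hr0
      simp only [map_add, map_mul, conj_I, map_zero] at hconj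
      rw [← conjAe_coe, aeval_algHom_apply, aeval_algHom_apply, conjAe_coe]
      linear_combination I * hconj + conj (aeval r p) * I_sq
    · exact h
    · exact absurd hr0 (hqp r h)
  obtain ⟨c, R, hFR⟩ := exists_eq_C_mul_map_ofReal_of_roots_im_eq_zero F hroots
  exact exists_eq_smul_of_map_add_I_mul_eq hq hFR

end Polynomial

namespace MvPolynomial

variable {σ R : Type*} [CommSemiring R]

noncomputable def restrictLine (h : MvPolynomial σ R) (a b : σ → R) : Polynomial R :=
  aeval (fun i => Polynomial.C (a i) + Polynomial.C (b i) * Polynomial.X) h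

theorem aeval_restrictLine {A : Type*} [CommSemiring A] [Algebra R A] (h : MvPolynomial σ R)
    (a b : σ → R) (t : A) :
    Polynomial.aeval t (h.restrictLine a b) =
      aeval (fun i => algebraMap R A (a i) + algebraMap R A (b i) * t) h := by
  rw [restrictLine, ← AlgHom.comp_apply, comp_aeval]
  simp

theorem eval_restrictLine (h : MvPolynomial σ R) (a b : σ → R) (t : R) :
    (h.restrictLine a b).eval t = eval (fun i => a i + b i * t) h := by
  simpa using aeval_restrictLine h a b t

end MvPolynomial

open Complex

theorem Complex.im_ofReal_add_ofReal_mul_pos (a : ℝ) {b : ℝ} (hb : 0 < b) {t : ℂ}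
    (ht : 0 < t.im) : 0 < ((a : ℂ) + b * t).im := by
  simpa using mul_pos hb ht

section Stability

variable {σ : Type*} {f g : MvPolynomial σ ℝ}

theorem ProperPosition.aeval_add_I_mul_ne_zero (hfg : ProperPosition f g) {z : σ → ℂ}
    (hz : ∀ i, 0 < (z i).im) :
    aeval z g + I * aeval z f ≠ 0 := by
  simpa [smul_eq_C_mul, eval_map, aeval_def] using hfg z hz

theorem IsRealStable.restrictLine_ne_zero (hg : IsRealStable g) (a : σ → ℝ) {b : σ → ℝ}
    (hb : ∀ i, 0 < b i) : g.restrictLine a b ≠ 0 := by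
  intro h0
  apply hg _ (fun i => im_ofReal_add_ofReal_mul_pos (a i) (hb i) (t := I) (by simp))
  simpa [h0] using (g.aeval_restrictLine a b I).symm

theorem ProperPosition.aeval_restrictLine_add_I_mul_ne_zero (hfg : ProperPosition f g)
    (a : σ → ℝ) {b : σ → ℝ} (hb : ∀ i, 0 < b i) {t : ℂ} (ht : 0 < t.im) :
    Polynomial.aeval t (g.restrictLine a b) + I * Polynomial.aeval t (f.restrictLine a b) ≠ 0 := by
  rw [aeval_restrictLine, aeval_restrictLine]
  exact hfg.aeval_add_I_mul_ne_zero (fun i => im_ofReal_add_ofReal_mul_pos (a i) (hb i) ht)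

theorem exists_restrictLine_eq_smul_of_properPosition (hgs : IsRealStable g)
    (hfg : ProperPosition f g) (hgf : ProperPosition g f) (a : σ → ℝ) {b : σ → ℝ}
    (hb : ∀ i, 0 < b i) : ∃ c : ℝ, f.restrictLine a b = c • g.restrictLine a b :=
  Polynomial.exists_eq_smul_of_add_I_mul_ne_zero (hgs.restrictLine_ne_zero a hb)
    (fun _ => hfg.aeval_restrictLine_add_I_mul_ne_zero a hb)
    (fun _ => hgf.aeval_restrictLine_add_I_mul_ne_zero a hb)

theorem eval_mul_eval_eq_of_properPosition_of_lt (hgs : IsRealStable g)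
    (hfg : ProperPosition f g) (hgf : ProperPosition g f) {x y : σ → ℝ} (hxy : ∀ i, x i < y i) :
    eval x f * eval y g = eval y f * eval x g := by
  obtain ⟨c, hc⟩ := exists_restrictLine_eq_smul_of_properPosition hgs hfg hgf x
    (b := y - x) (fun i => sub_pos.mpr (hxy i))
  have hline t : eval (fun i => x i + (y - x) i * t) f =
      c * eval (fun i => x i + (y - x) i * t) g := by
    simp only [← eval_restrictLine, hc, Polynomial.eval_smul, smul_eq_mul]
  have h0 := hline 0
  have h1 := hline 1
  simp only [mul_zero, add_zero, mul_one, Pi.sub_apply, add_sub_cancel] at h0 h1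
  rw [h0, h1]
  ring

theorem IsRealStable.exists_pos_eval_add_ne_zero (hg : IsRealStable g) (w : σ → ℝ) :
    ∃ s > 0, eval (fun i => w i + s) g ≠ 0 := by
  obtain ⟨s, hs, hroot⟩ :=
    (Set.Ioi_infinite (0 : ℝ)).exists_notMem_finset (g.restrictLine w 1).roots.toFinset
  refine ⟨s, hs, fun h0 => hroot ?_⟩
  rw [Multiset.mem_toFinset,
    Polynomial.mem_roots (hg.restrictLine_ne_zero w (b := 1) fun _ => one_pos),
    Polynomial.IsRoot, eval_restrictLine]
  simpa using h0

/-- Compare `x` and `y` through a point above both at which `g` does not vanish. -/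
theorem eval_mul_eval_comm_of_properPosition (hgs : IsRealStable g)
    (hfg : ProperPosition f g) (hgf : ProperPosition g f) (x y : σ → ℝ) :
    eval x f * eval y g = eval y f * eval x g := by
  obtain ⟨s, hs, hz⟩ := hgs.exists_pos_eval_add_ne_zero (x ⊔ y)
  have hxz := eval_mul_eval_eq_of_properPosition_of_lt hgs hfg hgf (x := x)
    fun i => lt_add_of_le_of_pos (le_sup_left (b := y i)) hs
  have hyz := eval_mul_eval_eq_of_properPosition_of_lt hgs hfg hgf (x := y)
    fun i => lt_add_of_le_of_pos (le_sup_right (a := x i)) hs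
  apply mul_right_cancel₀ hz
  linear_combination eval y g * hxz - eval x g * hyz

end Stability

theorem MvPolynomial.exists_eq_smul_of_eval_mul_eval_comm {σ K : Type*} [Field K] [Infinite K]
    {f g : MvPolynomial σ K} (hg : g ≠ 0) (h : ∀ x y, eval x f * eval y g = eval y f * eval x g) :
    ∃ α : K, f = α • g := by
  obtain ⟨x₀, hx₀⟩ : ∃ x₀, eval x₀ g ≠ 0 := by
    by_contra! hzero
    exact hg (funext fun x => by simpa using hzero x)
  refine ⟨eval x₀ f / eval x₀ g, funext fun x => ?_⟩
  rw [smul_eval]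
  field_simp
  linear_combination h x x₀

theorem proper_position_symm_imp_proportional_general (n : ℕ)
    (f g : MvPolynomial (Fin n) ℝ) (hg : g ≠ 0)
    (hgs : IsRealStable g)
    (hfg : ProperPosition f g) (hgf : ProperPosition g f) :
    ∃ α : ℝ, f = α • g :=
  exists_eq_smul_of_eval_mul_eval_comm hg (eval_mul_eval_comm_of_properPosition hgs hfg hgf)

/-- If `f, g` are non-zero real stable polynomials with `f ≪ g` and `g ≪ f`,
then `f` is a real constant multiple of `g`. -/
theorem proper_position_symm_imp_proportional (n : ℕ)
    (f g : MvPolynomial (Fin n) ℝ) (hf : f ≠ 0) (hg : g ≠ 0)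
    (hfs : IsRealStable f) (hgs : IsRealStable g)
    (hfg : ProperPosition f g) (hgf : ProperPosition g f) :
    ∃ α : ℝ, f = α • g :=
  proper_position_symm_imp_proportional_general n f g hg hgs hfg hgf
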